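/- arXiv:1811.11813 — 2 statements merged into one kernel-verified Lean document; each statement's English description precedes it below -/
import Mathlib

section
/- Let X be a compact subset of R^n. Then the linear span of the functions x ↦ σ_p(w·x + θ), where σ_p(t) = t^p/p! for p ∈ ℕ, w ∈ R^n and θ ∈ R, is dense in C(X) with respect to the uniform norm. -/
/-!
For an affine function `g`, the span contains every `g ^ p / p!`, so its closure contains the
uniformly convergent sum `exp g`. The exponentials of affine functions form a multiplicative
monoid, since `exp g * exp h = exp (g + h)`, and they separate points because `exp` is injective.
Their span is therefore a point-separating subalgebra, dense by Stone–Weierstrass.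
-/

open NormedSpace

theorem NormedSpace.exp_mem_topologicalClosure_of_pow_mem {𝔸 : Type*} [NormedRing 𝔸]
    [NormedAlgebra ℝ 𝔸] [Algebra ℚ 𝔸] [CompleteSpace 𝔸] {V : Submodule ℝ 𝔸} {a : 𝔸}
    (hV : ∀ p : ℕ, a ^ p ∈ V) : exp a ∈ V.topologicalClosure := by
  rw [← SetLike.mem_coe, Submodule.topologicalClosure_coe]
  refine mem_closure_of_tendsto (exp_series_hasSum_exp' (𝕂 := ℝ) a).tendsto_sum_nat
    (Filter.Eventually.of_forall fun N => ?_)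
  exact V.sum_mem fun p _ => V.smul_mem _ (hV p)

namespace ContinuousMap

variable {X : Type*} [TopologicalSpace X] [CompactSpace X]

theorem exp_apply_eq_real_exp (g : C(X, ℝ)) (x : X) : exp g x = Real.exp (g x) := by
  rw [Real.exp_eq_exp_ℝ]
  exact map_exp (evalAlgHom ℝ ℝ x) (continuous_eval_const x) g

theorem topologicalClosure_eq_top_of_pow_mem (G : AddSubmonoid C(X, ℝ))
    (hG : ∀ x y, x ≠ y → ∃ g ∈ G, g x ≠ g y) {V : Submodule ℝ C(X, ℝ)}
    (hV : ∀ g ∈ G, ∀ p : ℕ, g ^ p ∈ V) : V.topologicalClosure = ⊤ := by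
  let E : Submonoid C(X, ℝ) :=
    { carrier := exp '' G
      one_mem' := ⟨0, G.zero_mem, exp_zero⟩
      mul_mem' := by
        rintro _ _ ⟨g, hg, rfl⟩ ⟨h, hh, rfl⟩
        exact ⟨g + h, G.add_mem hg hh, exp_add⟩ }
  have hsep : (Algebra.adjoin ℝ (E : Set C(X, ℝ))).SeparatesPoints := by
    intro x y hxy
    obtain ⟨g, hg, hgxy⟩ := hG x y hxy
    refine ⟨_, ⟨exp g, Algebra.subset_adjoin ⟨g, hg, rfl⟩, rfl⟩, ?_⟩
    simpa [exp_apply_eq_real_exp] using hgxy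
  have hle :
      Subalgebra.toSubmodule (Algebra.adjoin ℝ (E : Set C(X, ℝ))) ≤ V.topologicalClosure := by
    rw [Algebra.adjoin_eq_span, Submonoid.closure_eq, Submodule.span_le]
    rintro _ ⟨g, hg, rfl⟩
    exact exp_mem_topologicalClosure_of_pow_mem (hV g hg)
  refine eq_top_iff.mpr fun f _ => closure_minimal hle V.isClosed_topologicalClosure ?_
  have hf : f ∈ (Algebra.adjoin ℝ (E : Set C(X, ℝ))).topologicalClosure := by
    rw [subalgebra_topologicalClosure_eq_top_of_separatesPoints _ hsep]
    trivial
  exact hf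

end ContinuousMap

def affineFunctions (n : ℕ) (X : Set (Fin n → ℝ)) : AddSubmonoid C(X, ℝ) where
  carrier := {g | ∃ (w : Fin n → ℝ) (θ : ℝ), ∀ x : X, g x = ∑ i, w i * (x : Fin n → ℝ) i + θ}
  zero_mem' := ⟨0, 0, fun x => by simp⟩
  add_mem' := by
    rintro g h ⟨w, θ, hg⟩ ⟨v, η, hh⟩
    refine ⟨w + v, θ + η, fun x => ?_⟩
    simp only [ContinuousMap.add_apply, hg, hh, Pi.add_apply, add_mul, Finset.sum_add_distrib]
    ring

theorem exists_mem_affineFunctions_ne {n : ℕ} {X : Set (Fin n → ℝ)} (x y : X) (hxy : x ≠ y) :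
    ∃ g ∈ affineFunctions n X, g x ≠ g y := by
  obtain ⟨i, hi⟩ := Function.ne_iff.mp (Subtype.coe_ne_coe.mpr hxy)
  refine ⟨⟨fun z => (z : Fin n → ℝ) i, (continuous_apply i).comp continuous_subtype_val⟩,
    ⟨Pi.single i 1, 0, fun z => by simp [Pi.single_apply]⟩, hi⟩

theorem stmt2 (n : ℕ) (X : Set (Fin n → ℝ)) (hX : IsCompact X) :
    closure ((Submodule.span ℝ
      {f : C(X, ℝ) | ∃ (p : ℕ) (w : Fin n → ℝ) (θ : ℝ), ∀ x : X,
        f x = (∑ i, w i * (x : Fin n → ℝ) i + θ) ^ p / p.factorial} :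
      Submodule ℝ C(X, ℝ)) : Set C(X, ℝ)) = Set.univ := by
  have : CompactSpace X := isCompact_iff_compactSpace.mp hX
  rw [← Submodule.topologicalClosure_coe, ContinuousMap.topologicalClosure_eq_top_of_pow_mem
    (affineFunctions n X) exists_mem_affineFunctions_ne, Submodule.top_coe]
  rintro g ⟨w, θ, hg⟩ p
  have hfac : (p.factorial : ℝ) ≠ 0 := by positivity
  rw [← smul_inv_smul₀ hfac (g ^ p)]
  refine Submodule.smul_mem _ _ (Submodule.subset_span ⟨p, w, θ, fun x => ?_⟩)
  simp [hg x, div_eq_inv_mul]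
end

section
/- Let X ⊆ R^n be compact and let σ_p(t) = t^p/p!. If f : X → R is continuous and ε > 0, then there exist k ∈ ℕ, weights w_1,…,w_k ∈ R^n, biases θ_1,…,θ_k ∈ R, powers p_1,…,p_k ∈ ℕ, and output coefficients c_1,…,c_k ∈ R such that |f(x) − Σ_{i=1}^k c_i σ_{p_i}(w_i·x + θ_i)| < ε for all x ∈ X. -/
open Finset in
lemma polar_sup {ι : Type*} [Fintype ι] [DecidableEq ι] (R : Finset ι) :
    ∑ s : Finset ι, (if R ⊆ s then (-1:ℝ)^(Fintype.card ι - s.card) else 0)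
      = if R = univ then 1 else 0 := by
  have h1 : ∀ s : Finset ι, (-1:ℝ)^(Fintype.card ι - s.card) = (-1)^(sᶜ.card) := by
    intro s; rw [Finset.card_compl]
  calc ∑ s : Finset ι, (if R ⊆ s then (-1:ℝ)^(Fintype.card ι - s.card) else 0)
      = ∑ s : Finset ι, (if s ⊆ Rᶜ then (-1:ℝ)^(s.card) else 0) := by
        refine Fintype.sum_equiv ⟨fun s => sᶜ, fun s => sᶜ, fun s => compl_compl s,
          fun s => compl_compl s⟩ _ _ ?_
        intro s
        simp only [Equiv.coe_fn_mk]
        rw [h1 s]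
        have h3 : R ⊆ s ↔ sᶜ ⊆ Rᶜ := (Finset.compl_subset_compl ..).symm
        by_cases hRs : R ⊆ s
        · rw [if_pos hRs, if_pos (h3.mp hRs)]
        · rw [if_neg hRs, if_neg (fun hc => hRs (h3.mpr hc))]
    _ = ∑ s ∈ Rᶜ.powerset, (-1:ℝ)^(s.card) := by
        rw [← Finset.sum_filter]
        congr 1
        ext s
        simp [Finset.mem_powerset]
    _ = if R = univ then 1 else 0 := by
        have h0 := @Finset.sum_powerset_neg_one_pow_card ι _ Rᶜ
        have h2 : ((∑ m ∈ Rᶜ.powerset, (-1 : ℤ) ^ m.card : ℤ) : ℝ)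
            = ∑ m ∈ Rᶜ.powerset, (-1 : ℝ) ^ m.card := by push_cast; rfl
        rw [← h2, h0]
        have h4 : (Rᶜ = ∅) ↔ (R = univ) := by
          constructor
          · intro h; have := congrArg compl h; simpa using this
          · intro h; simp [h]
        by_cases h : R = univ <;> simp [h, h4]

open Finset in
lemma polar {ι : Type*} [Fintype ι] [DecidableEq ι] (y : ι → ℝ) :
    ∑ s : Finset ι, (-1:ℝ)^(Fintype.card ι - s.card) * (∑ i ∈ s, y i)^(Fintype.card ι)
      = (Nat.factorial (Fintype.card ι) : ℝ) * ∏ i, y i := by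
  classical
  set d := Fintype.card ι with hd
  have hfil : ∀ s : Finset ι, Fintype.piFinset (fun _ : Fin d => s)
      = univ.filter (fun p : Fin d → ι => ∀ k, p k ∈ s) := by
    intro s; ext p; simp [Fintype.mem_piFinset]
  calc ∑ s : Finset ι, (-1:ℝ)^(d - s.card) * (∑ i ∈ s, y i)^d
      = ∑ s : Finset ι, ∑ p : Fin d → ι,
          (if ∀ k, p k ∈ s then (-1:ℝ)^(d - s.card) * ∏ k, y (p k) else 0) := by
        refine Finset.sum_congr rfl fun s _ => ?_
        rw [Finset.sum_pow', hfil s, Finset.sum_filter, Finset.mul_sum]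
        refine Finset.sum_congr rfl fun p _ => ?_
        split <;> simp
    _ = ∑ p : Fin d → ι, (∏ k, y (p k)) *
          ∑ s : Finset ι, (if Finset.image p univ ⊆ s then (-1:ℝ)^(d - s.card) else 0) := by
        rw [Finset.sum_comm]
        refine Finset.sum_congr rfl fun p _ => ?_
        rw [Finset.mul_sum]
        refine Finset.sum_congr rfl fun s _ => ?_
        have : (Finset.image p univ ⊆ s) ↔ ∀ k, p k ∈ s := by
          simp [Finset.image_subset_iff]
        by_cases h : ∀ k, p k ∈ s
        · rw [if_pos h, if_pos (this.mpr h), mul_comm]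
        · rw [if_neg h, if_neg (fun hc => h (this.mp hc)), mul_zero]
    _ = ∑ p : Fin d → ι, (if Function.Bijective p then (∏ i, y i) else 0) := by
        refine Finset.sum_congr rfl fun p _ => ?_
        rw [polar_sup]
        have himg : (Finset.image p univ = univ) ↔ Function.Surjective p := by
          rw [Finset.eq_univ_iff_forall]
          simp [Function.Surjective, Finset.mem_image, eq_comm]
        have hsb : Function.Surjective p ↔ Function.Bijective p := by
          constructor
          · intro h
            exact (Fintype.bijective_iff_surjective_and_card p).mpr ⟨h, by simp [hd]⟩
          · exact fun h => h.2
        by_cases h : Function.Bijective p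
        · rw [if_pos (himg.mpr (hsb.mpr h)), if_pos h, mul_one, h.prod_comp]
        · rw [if_neg (fun hc => h (hsb.mp (himg.mp hc))), if_neg h, mul_zero]
    _ = (Nat.factorial d : ℝ) * ∏ i, y i := by
        rw [← Finset.sum_filter, Finset.sum_const, nsmul_eq_mul]
        congr 1
        have h1 : (univ.filter (fun p : Fin d → ι => Function.Bijective p)).card
            = Fintype.card {p : Fin d → ι // Function.Bijective p} :=
          (Fintype.card_subtype _).symm
        have e : {p : Fin d → ι // Function.Bijective p} ≃ (Fin d ≃ ι) :=
          { toFun := fun p => Equiv.ofBijective p.1 p.2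
            invFun := fun e => ⟨e, e.bijective⟩
            left_inv := fun p => rfl
            right_inv := fun e => by ext x; rfl }
        rw [h1, Fintype.card_congr e, Fintype.card_equiv (Fintype.equivFinOfCardEq hd.symm).symm]
        simp

section main
variable {n : ℕ} {X : Set (Fin n → ℝ)}

noncomputable def aff (w : Fin n → ℝ) (θ : ℝ) : C(X, ℝ) :=
  ⟨fun x => ∑ j, w j * (x : Fin n → ℝ) j + θ, by
    refine Continuous.add ?_ continuous_const
    exact continuous_finset_sum _ fun j _ => continuous_const.mul
      ((continuous_apply j).comp continuous_subtype_val)⟩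

def genSet (n : ℕ) (X : Set (Fin n → ℝ)) : Set C(X, ℝ) :=
  {g | ∃ (w : Fin n → ℝ) (θ : ℝ) (p : ℕ), g = (aff w θ) ^ p}

lemma prod_aff_mem {ι : Type*} [Fintype ι] [DecidableEq ι]
    (L : ι → Fin n → ℝ) (T : ι → ℝ) :
    ∏ i, (aff (L i) (T i) : C(X, ℝ)) ∈ Submodule.span ℝ (genSet n X) := by
  classical
  set d := Fintype.card ι with hd
  have key : ∏ i, (aff (L i) (T i) : C(X, ℝ))
      = ((Nat.factorial d : ℝ)⁻¹) • ∑ s : Finset ι,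
          ((-1:ℝ)^(d - s.card)) • ((aff (∑ i ∈ s, L i) (∑ i ∈ s, T i) : C(X, ℝ)) ^ d) := by
    ext x
    have hy := polar (fun i => ∑ j, L i j * (x : Fin n → ℝ) j + T i)
    have haff : ∀ s : Finset ι,
        (aff (∑ i ∈ s, L i) (∑ i ∈ s, T i) : C(X, ℝ)) x
          = ∑ i ∈ s, (∑ j, L i j * (x : Fin n → ℝ) j + T i) := by
      intro s
      simp only [aff, ContinuousMap.coe_mk]
      rw [Finset.sum_add_distrib]
      congr 1
      rw [Finset.sum_comm]
      exact Finset.sum_congr rfl fun j _ => by rw [Finset.sum_apply, Finset.sum_mul]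
    simp only [ContinuousMap.prod_apply, ContinuousMap.smul_apply, ContinuousMap.sum_apply,
      ContinuousMap.pow_apply, smul_eq_mul]
    simp only [haff]
    simp only [aff, ContinuousMap.coe_mk]
    have hy' : ∑ s : Finset ι, (-1:ℝ)^(d - s.card)
          * (∑ i ∈ s, (∑ j, L i j * (x : Fin n → ℝ) j + T i))^d
        = (Nat.factorial d : ℝ) * ∏ i, (∑ j, L i j * (x : Fin n → ℝ) j + T i) := hy
    rw [hy', inv_mul_cancel_left₀ (by positivity)]
  rw [key]
  refine Submodule.smul_mem _ _ (Submodule.sum_mem _ fun s _ => Submodule.smul_mem _ _ ?_)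
  exact Submodule.subset_span ⟨_, _, _, rfl⟩
end main

section main2
variable {n : ℕ} {X : Set (Fin n → ℝ)}

lemma mul_mem_span {a b : C(X, ℝ)} (ha : a ∈ Submodule.span ℝ (genSet n X))
    (hb : b ∈ Submodule.span ℝ (genSet n X)) :
    a * b ∈ Submodule.span ℝ (genSet n X) := by
  classical
  have base : ∀ g1 ∈ genSet n X, ∀ g2 ∈ genSet n X,
      g1 * g2 ∈ Submodule.span ℝ (genSet n X) := by
    rintro g1 ⟨w, θ, p, rfl⟩ g2 ⟨w', θ', q, rfl⟩
    have h := prod_aff_mem (X := X) (Sum.elim (fun _ : Fin p => w) (fun _ : Fin q => w'))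
      (Sum.elim (fun _ : Fin p => θ) (fun _ : Fin q => θ'))
    simp only [Fintype.prod_sum_type, Sum.elim_inl, Sum.elim_inr, Finset.prod_const,
      Finset.card_univ, Fintype.card_fin] at h
    exact h
  have step1 : ∀ g1 ∈ genSet n X, ∀ b ∈ Submodule.span ℝ (genSet n X),
      g1 * b ∈ Submodule.span ℝ (genSet n X) := by
    intro g1 hg1 b hb
    induction hb using Submodule.span_induction with
    | mem x hx => exact base g1 hg1 x hx
    | zero => simpa using Submodule.zero_mem _
    | add x y _ _ hx hy => rw [mul_add]; exact Submodule.add_mem _ hx hy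
    | smul c x _ hx => rw [mul_smul_comm]; exact Submodule.smul_mem _ _ hx
  induction ha using Submodule.span_induction with
  | mem x hx => exact step1 x hx b hb
  | zero => simpa using Submodule.zero_mem _
  | add x y _ _ hx hy => rw [add_mul]; exact Submodule.add_mem _ hx hy
  | smul c x _ hx => rw [smul_mul_assoc]; exact Submodule.smul_mem _ _ hx

end main2

theorem stmt10 (n : ℕ) (X : Set (Fin n → ℝ)) (hX : IsCompact X)
    (f : (Fin n → ℝ) → ℝ) (hf : ContinuousOn f X) (ε : ℝ) (hε : 0 < ε) :
    ∃ (k : ℕ) (w : Fin k → Fin n → ℝ) (θ : Fin k → ℝ) (p : Fin k → ℕ)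
      (c : Fin k → ℝ), ∀ x ∈ X,
      |f x - ∑ i, c i * ((∑ j, w i j * x j + θ i) ^ (p i) / (p i).factorial)| < ε := by
  classical
  haveI : CompactSpace X := isCompact_iff_compactSpace.mp hX
  set A : Subalgebra ℝ C(X, ℝ) := (Submodule.span ℝ (genSet n X)).toSubalgebra
    (Submodule.subset_span ⟨0, 0, 0, (pow_zero _).symm⟩)
    (fun a b ha hb => mul_mem_span ha hb) with hA
  have sep : A.SeparatesPoints := by
    intro x y hxy
    have hj : ∃ j, (x : Fin n → ℝ) j ≠ (y : Fin n → ℝ) j := by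
      by_contra h; push_neg at h; exact hxy (Subtype.ext (funext h))
    obtain ⟨j, hj⟩ := hj
    refine ⟨_, ⟨aff (fun j' => if j' = j then 1 else 0) 0 ^ 1,
      Submodule.subset_span ⟨_, _, 1, rfl⟩, rfl⟩, ?_⟩
    simpa [aff, Finset.sum_ite_eq', ite_mul] using hj
  obtain ⟨g, hg⟩ := ContinuousMap.exists_mem_subalgebra_near_continuous_of_separatesPoints
    A sep (X.restrict f) hf.restrict ε hε
  have hgspan : (g : C(X, ℝ)) ∈ Submodule.span ℝ (genSet n X) := g.2
  rw [Submodule.mem_span_set'] at hgspan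
  obtain ⟨k, c, v, hv⟩ := hgspan
  choose w θ p hw using fun i => (v i).2
  refine ⟨k, w, θ, p, fun i => c i * (p i).factorial, fun x hx => ?_⟩
  have hsum : ∑ i, (c i * ((p i).factorial : ℝ))
        * ((∑ j, w i j * x j + θ i) ^ (p i) / ((p i).factorial : ℝ))
      = (g : C(X, ℝ)) ⟨x, hx⟩ := by
    rw [← hv]
    simp only [ContinuousMap.sum_apply, ContinuousMap.smul_apply, smul_eq_mul]
    refine Finset.sum_congr rfl fun i _ => ?_
    rw [hw i]
    simp only [ContinuousMap.pow_apply, aff, ContinuousMap.coe_mk]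
    have hfac : (((p i).factorial : ℝ)) ≠ 0 := by
      exact_mod_cast (p i).factorial_pos.ne'
    field_simp
  have hgx := hg ⟨x, hx⟩
  rw [Real.norm_eq_abs] at hgx
  rw [hsum]
  exact (abs_sub_comm _ _).trans_lt hgx
end
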